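/- Let (V,w) be a finite weighted graph as in the context, let T be an encoding tree of (V,w) of height K in which every leaf is at height 0 and the root λ at height K, and for 1 ≤ h ≤ K−1 let U_h be the set of nodes of T at height h. Then the structural entropy satisfies the exact telescoping identity H^T = − Σ_{v∈V} (d_v/vol(V))·log(d_v/vol(V)) − Σ_{h=1}^{K−1} Σ_{α∈U_h} ((g(V_α) − Σ_{i=1}^{l_α} g(V_{α_i}))/vol(V))·log(vol(V_α)/vol(V)), where α_1,…,α_{l_α} are the children of α. -/
import Mathlib


open Finset

variable {V ι : Type*}

/-- The (weighted) degree of a vertex. -/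
noncomputable def deg [Fintype V] (w : V → V → ℝ) (v : V) : ℝ := ∑ u, w v u

/-- The volume of a vertex subset: the sum of the degrees of its vertices. -/
noncomputable def vol [Fintype V] (w : V → V → ℝ) (A : Finset V) : ℝ := ∑ v ∈ A, deg w v

/-- The cut of a vertex subset: the total weight of edges crossing its boundary. -/
noncomputable def cut [Fintype V] [DecidableEq V] (w : V → V → ℝ) (A : Finset V) : ℝ :=
  ∑ u ∈ Aᶜ, ∑ v ∈ A, w u v

/-- An encoding tree of a weighted graph on the vertex set `V`, with node type `ι`:
a finite rooted tree (given by a parent map), each node labeled with a nonempty subset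
of `V`, the root labeled with `V` itself, every leaf labeled with a singleton, and the
labels of the children of any internal node forming a partition of that node's label. -/
structure EncodingTree (V : Type*) [Fintype V] [DecidableEq V]
    (ι : Type*) [Fintype ι] [DecidableEq ι] where
  root : ι
  parent : ι → ι
  label : ι → Finset V
  parent_root : parent root = root
  label_root : label root = Finset.univ
  label_nonempty : ∀ α, (label α).Nonempty
  leaf_singleton : ∀ α, (∀ β, β ≠ root → parent β ≠ α) → (label α).card = 1
  children_disjoint : ∀ ⦃α β γ : ι⦄, β ≠ root → γ ≠ root → parent β = α → parent γ = α →
    β ≠ γ → Disjoint (label β) (label γ)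
  children_union : ∀ α : ι, (∃ β, β ≠ root ∧ parent β = α) →
    (Finset.univ.filter fun β => β ≠ root ∧ parent β = α).biUnion label = label α

variable [Fintype V] [DecidableEq V] [Fintype ι] [DecidableEq ι]

/-- The children of a node of an encoding tree. -/
def EncodingTree.children (T : EncodingTree V ι) (α : ι) : Finset ι :=
  Finset.univ.filter fun β => β ≠ T.root ∧ T.parent β = α

/-- The structural entropy of the weighted graph `(V, w)` under the encoding tree `T`:
`H^T = − Σ_{α ≠ root} (g(V_α)/vol(V)) · log(vol(V_α)/vol(V_{α⁻}))`. -/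
noncomputable def structEntropy (w : V → V → ℝ) (T : EncodingTree V ι) : ℝ :=
  - ∑ α ∈ Finset.univ.filter (fun α => α ≠ T.root),
      (cut w (T.label α) / vol w Finset.univ) *
        Real.log (vol w (T.label α) / vol w (T.label (T.parent α)))

/-- Shannon entropy of the normalized degree distribution:
`H(S) = − Σ_{v ∈ V} (d_v/vol(V)) · log(d_v/vol(V))`. -/
noncomputable def shannonDeg (w : V → V → ℝ) : ℝ :=
  - ∑ v, (deg w v / vol w Finset.univ) * Real.log (deg w v / vol w Finset.univ)

/-- The layer entropy `H(U_h)` at height `h`, for a height function `ht` on the nodes: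
`H(U_h) = − Σ_{α ∈ U_h} (vol(V_α)/vol(V)) · log(vol(V_α)/vol(V))`. -/
noncomputable def layerEntropy (w : V → V → ℝ) (T : EncodingTree V ι) (ht : ι → ℕ)
    (h : ℕ) : ℝ :=
  - ∑ α ∈ Finset.univ.filter (fun α => ht α = h),
      (vol w (T.label α) / vol w Finset.univ) *
        Real.log (vol w (T.label α) / vol w Finset.univ)

/-- The layer weight `η_h = max_{α ∈ U_h} ((Σ_i g(V_{α_i}) − g(V_α)) / vol(V_α))`,
where the maximum is over the nodes at height `h` and `α_i` ranges over children of `α`. -/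
noncomputable def layerWeight (w : V → V → ℝ) (T : EncodingTree V ι) (ht : ι → ℕ)
    (h : ℕ) : ℝ :=
  sSup ((fun α => ((∑ β ∈ T.children α, cut w (T.label β)) - cut w (T.label α)) /
    vol w (T.label α)) '' {α : ι | ht α = h})


lemma cut_singleton' (w : V → V → ℝ) (hsym : ∀ u v, w u v = w v u)
    (hloop : ∀ v, w v v = 0) (v : V) : cut w {v} = deg w v := by
  unfold cut deg
  simp only [Finset.sum_singleton]
  have h := Finset.sum_compl_add_sum ({v} : Finset V) (fun u => w u v)
  rw [Finset.sum_singleton, hloop] at h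
  rw [add_zero] at h
  rw [h]
  exact Finset.sum_congr rfl (fun u _ => hsym u v)

lemma vol_singleton' (w : V → V → ℝ) (v : V) : vol w {v} = deg w v :=
  Finset.sum_singleton _ _

/-- **Telescoping identity (central step in the proof of Theorem 4.2).** For an encoding
tree of height `K` (leaves at height `0`, root at height `K`),
`H^T = H(S) − Σ_{h=1}^{K−1} Σ_{α ∈ U_h} ((g(V_α) − Σ_i g(V_{α_i}))/vol(V)) · log(vol(V_α)/vol(V))`. -/
theorem structural_entropy_telescoping [Nonempty V]
    (w : V → V → ℝ)
    (hsym : ∀ u v, w u v = w v u)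
    (hnn : ∀ u v, 0 ≤ w u v)
    (hloop : ∀ v, w v v = 0)
    (hdeg : ∀ v, 0 < deg w v)
    (T : EncodingTree V ι) (K : ℕ) (ht : ι → ℕ)
    (hroot : ht T.root = K)
    (hleaf : ∀ α, (∀ β, β ≠ T.root → T.parent β ≠ α) → ht α = 0)
    (hparent : ∀ β, β ≠ T.root → ht (T.parent β) = ht β + 1) :
    structEntropy w T =
      (- ∑ v, (deg w v / vol w Finset.univ) * Real.log (deg w v / vol w Finset.univ))
      - ∑ h ∈ Finset.Icc 1 (K - 1), ∑ α ∈ Finset.univ.filter (fun α => ht α = h),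
          ((cut w (T.label α) - ∑ β ∈ T.children α, cut w (T.label β)) / vol w Finset.univ) *
            Real.log (vol w (T.label α) / vol w Finset.univ) := by
  classical
  set Vt := vol w Finset.univ with hVtdef
  have hVtpos : 0 < Vt := Finset.sum_pos (fun v _ => hdeg v) Finset.univ_nonempty
  have hvolpos : ∀ α : ι, 0 < vol w (T.label α) :=
    fun α => Finset.sum_pos (fun v _ => hdeg v) (T.label_nonempty α)
  -- height bound for non-root nodes
  have ht_lt : ∀ α : ι, α ≠ T.root → ht α < K := by
    have aux : ∀ n : ℕ, ∀ α : ι, Finset.univ.sup ht ≤ ht α + n → α ≠ T.root → ht α < K := by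
      intro n
      induction n with
      | zero =>
        intro α hle hα
        have h1 := hparent α hα
        have h2 : ht (T.parent α) ≤ Finset.univ.sup ht := Finset.le_sup (Finset.mem_univ _)
        omega
      | succ n ih =>
        intro α hle hα
        by_cases hp : T.parent α = T.root
        · have h1 := hparent α hα
          rw [hp, hroot] at h1
          omega
        · have h1 := hparent α hα
          have := ih (T.parent α) (by omega) hp
          omega
    intro α hα
    exact aux (Finset.univ.sup ht) α (Nat.le_add_left _ _) hα
  -- membership in children
  have hmem_children : ∀ β γ : ι, γ ∈ T.children β ↔ (γ ≠ T.root ∧ T.parent γ = β) := by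
    intro β γ
    simp [EncodingTree.children, Finset.mem_filter]
  -- a node with a child has positive height
  have ht_pos_of_child : ∀ β γ : ι, γ ∈ T.children β → ht β = ht γ + 1 := by
    intro β γ hγ
    rw [hmem_children] at hγ
    rw [← hγ.2]
    exact hparent γ hγ.1
  -- every vertex lies in the label of some leaf
  have exists_leaf : ∀ v : V, ∃ γ : ι, T.children γ = ∅ ∧ v ∈ T.label γ := by
    have aux : ∀ n : ℕ, ∀ α : ι, ht α ≤ n → ∀ v ∈ T.label α,
        ∃ γ : ι, T.children γ = ∅ ∧ v ∈ T.label γ := by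
      intro n
      induction n with
      | zero =>
        intro α hn v hv
        by_cases hc : T.children α = ∅
        · exact ⟨α, hc, hv⟩
        · obtain ⟨β, hβ⟩ := Finset.nonempty_iff_ne_empty.2 hc
          have := ht_pos_of_child α β hβ
          omega
      | succ n ih =>
        intro α hn v hv
        by_cases hc : T.children α = ∅
        · exact ⟨α, hc, hv⟩
        · obtain ⟨β, hβ⟩ := Finset.nonempty_iff_ne_empty.2 hc
          rw [hmem_children] at hβ
          have hu := T.children_union α ⟨β, hβ.1, hβ.2⟩
          rw [← hu] at hv
          obtain ⟨γ, hγmem, hvγ⟩ := Finset.mem_biUnion.1 hv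
          have hγc : γ ∈ T.children γ ∨ True := Or.inr trivial
          have hγ' : γ ≠ T.root ∧ T.parent γ = α := by
            simpa [Finset.mem_filter] using hγmem
          have hhtγ := hparent γ hγ'.1
          rw [hγ'.2] at hhtγ
          exact ih γ (by omega) v hvγ
    intro v
    exact aux K T.root (by rw [hroot]) v (by rw [T.label_root]; exact Finset.mem_univ v)
  -- label of a non-root node is contained in label of its parent
  have hsub : ∀ α : ι, α ≠ T.root → T.label α ⊆ T.label (T.parent α) := by
    intro α hα
    rw [← T.children_union (T.parent α) ⟨α, hα, rfl⟩]
    exact Finset.subset_biUnion_of_mem T.label (by simp [Finset.mem_filter, hα])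
  -- labels of distinct nodes at the same height are disjoint
  have hdisj : ∀ j : ℕ, ∀ α β : ι, α ≠ β → ht α = ht β → K ≤ ht α + j →
      Disjoint (T.label α) (T.label β) := by
    intro j
    induction j with
    | zero =>
      intro α β hne hh hK'
      rcases eq_or_ne α T.root with rfl | hα
      · have hβ : β ≠ T.root := fun h => hne h.symm
        have := ht_lt β hβ
        omega
      · have := ht_lt α hα
        omega
    | succ j ih =>
      intro α β hne hh hK'
      have hα : α ≠ T.root := by
        rintro rfl
        have := ht_lt β (fun h => hne h.symm)
        omega
      have hβ : β ≠ T.root := by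
        rintro rfl
        have := ht_lt α hα
        omega
      by_cases hpp : T.parent α = T.parent β
      · exact T.children_disjoint hα hβ rfl hpp.symm hne
      · have hIH := ih (T.parent α) (T.parent β) hpp
          (by rw [hparent α hα, hparent β hβ, hh])
          (by rw [hparent α hα]; omega)
        exact hIH.mono (hsub α hα) (hsub β hβ)
  -- the two cases K = 0, K ≥ 1
  rcases Nat.eq_zero_or_pos K with rfl | hK
  · -- K = 0 : the tree is a single node and V is a singleton
    have hallroot : ∀ α : ι, α = T.root := by
      intro α
      by_contra hα
      have := ht_lt α hα
      omega
    have hfilter : Finset.univ.filter (fun α : ι => α ≠ T.root) = ∅ := by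
      apply Finset.filter_eq_empty_iff.2
      intro α _
      simp [hallroot α]
    obtain ⟨v, hv⟩ := Finset.card_eq_one.1 (by
      have := T.leaf_singleton T.root (fun β hβ _ => hβ (hallroot β))
      rwa [T.label_root] at this)
    have hdegv : ∀ u : V, deg w u / Vt = 1 := by
      intro u
      have hu : u = v := by
        have : u ∈ ({v} : Finset V) := by rw [← hv]; exact Finset.mem_univ u
        simpa using this
      have : Vt = deg w v := by
        rw [hVtdef]
        unfold vol
        rw [hv, Finset.sum_singleton]
      rw [hu, this]
      exact div_self (ne_of_gt (hdeg v))
    have h1 : (∑ u : V, (deg w u / Vt) * Real.log (deg w u / Vt)) = 0 := by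
      apply Finset.sum_eq_zero
      intro u _
      rw [hdegv u, Real.log_one, mul_zero]
    rw [structEntropy, hfilter]
    simp [h1, Finset.Icc_eq_empty_of_lt (show (1:ℕ) > 0 - 1 by omega)]
  -- main case: K ≥ 1
  have hlog_split : ∀ α : ι, α ≠ T.root →
      Real.log (vol w (T.label α) / vol w (T.label (T.parent α))) =
      Real.log (vol w (T.label α) / Vt) - Real.log (vol w (T.label (T.parent α)) / Vt) := by
    intro α hα
    rw [Real.log_div (ne_of_gt (hvolpos α)) (ne_of_gt (hvolpos (T.parent α))),
        Real.log_div (ne_of_gt (hvolpos α)) (ne_of_gt hVtpos),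
        Real.log_div (ne_of_gt (hvolpos (T.parent α))) (ne_of_gt hVtpos)]
    ring
  -- abbreviations
  set NR := Finset.univ.filter (fun α : ι => α ≠ T.root) with hNR
  set C : ι → ℝ := fun γ =>
    ((∑ β ∈ T.children γ, cut w (T.label β)) / Vt) * Real.log (vol w (T.label γ) / Vt)
    with hC
  set G : ι → ℝ := fun γ =>
    if γ = T.root then 0 else (cut w (T.label γ) / Vt) * Real.log (vol w (T.label γ) / Vt)
    with hG
  -- Step 1: structural entropy as a sum over all nodes
  have step1 : structEntropy w T = ∑ γ : ι, (C γ - G γ) := by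
    rw [structEntropy]
    have e1 : ∀ α ∈ NR,
        (cut w (T.label α) / Vt) * Real.log (vol w (T.label α) / vol w (T.label (T.parent α)))
        = (cut w (T.label α) / Vt) * Real.log (vol w (T.label α) / Vt)
          - (cut w (T.label α) / Vt) * Real.log (vol w (T.label (T.parent α)) / Vt) := by
      intro α hα
      rw [hlog_split α (Finset.mem_filter.1 hα).2]
      ring
    rw [Finset.sum_congr rfl e1, Finset.sum_sub_distrib, neg_sub]
    have hA : (∑ α ∈ NR, (cut w (T.label α) / Vt) * Real.log (vol w (T.label (T.parent α)) / Vt))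
        = ∑ γ : ι, C γ := by
      rw [← Finset.sum_fiberwise NR T.parent
        (fun α => (cut w (T.label α) / Vt) * Real.log (vol w (T.label (T.parent α)) / Vt))]
      apply Finset.sum_congr rfl
      intro γ _
      have hfilter_eq : NR.filter (fun α => T.parent α = γ) = T.children γ := by
        rw [hNR, Finset.filter_filter]
        rfl
      rw [hfilter_eq, hC]
      simp only
      rw [Finset.sum_div, Finset.sum_mul]
      apply Finset.sum_congr rfl
      intro β hβ
      rw [(hmem_children γ β |>.1 hβ).2]
    have hB : (∑ α ∈ NR, (cut w (T.label α) / Vt) * Real.log (vol w (T.label α) / Vt))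
        = ∑ γ : ι, G γ := by
      rw [hNR, Finset.sum_filter]
      apply Finset.sum_congr rfl
      intro γ _
      rw [hG]
      by_cases hγ : γ = T.root <;> simp [hγ]
    rw [hA, hB, ← Finset.sum_sub_distrib]
  rw [step1]
  -- Step 2: the double sum on the RHS as a single sum over internal non-root nodes
  set Mid := Finset.univ.filter (fun γ : ι => γ ≠ T.root ∧ ht γ ≠ 0) with hMid
  set ψ : ι → ℝ := fun γ =>
    ((cut w (T.label γ) - ∑ β ∈ T.children γ, cut w (T.label β)) / Vt) *
      Real.log (vol w (T.label γ) / Vt) with hψ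
  have step2 : (∑ h ∈ Finset.Icc 1 (K - 1), ∑ α ∈ Finset.univ.filter (fun α => ht α = h), ψ α)
      = ∑ α ∈ Mid, ψ α := by
    rw [← Finset.sum_fiberwise_of_maps_to (g := ht) (t := Finset.Icc 1 (K - 1))
      (fun γ hγ => by
        rw [hMid, Finset.mem_filter] at hγ
        have h1 := ht_lt γ hγ.2.1
        rw [Finset.mem_Icc]
        omega) ψ]
    apply Finset.sum_congr rfl
    intro h hh
    rw [Finset.mem_Icc] at hh
    congr 1
    rw [hMid, Finset.filter_filter]
    apply Finset.filter_congr
    intro γ _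
    constructor
    · intro hγ
      refine ⟨⟨?_, by omega⟩, hγ⟩
      rintro rfl
      rw [hroot] at hγ
      omega
    · exact fun hγ => hγ.2
  rw [step2]
  -- Step 3: partition the node sum into root, leaves and internal nodes
  have hsplit1 : (∑ γ : ι, (C γ - G γ))
      = (C T.root - G T.root) + ∑ γ ∈ NR, (C γ - G γ) := by
    rw [← Finset.add_sum_erase Finset.univ (fun γ => C γ - G γ) (Finset.mem_univ T.root)]
    congr 1
    apply Finset.sum_congr _ (fun _ _ => rfl)
    ext γ
    simp [hNR, Finset.mem_erase, Finset.mem_filter]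
  have hroot_term : C T.root - G T.root = 0 := by
    have h1 : G T.root = 0 := by rw [hG]; simp
    have h2 : Real.log (vol w (T.label T.root) / Vt) = 0 := by
      rw [T.label_root, ← hVtdef, div_self (ne_of_gt hVtpos), Real.log_one]
    rw [h1, hC, sub_zero]
    simp only [h2, mul_zero]
  set Lv := NR.filter (fun γ : ι => ht γ = 0) with hLv
  have hsplit2 : (∑ γ ∈ NR, (C γ - G γ))
      = (∑ γ ∈ Lv, (C γ - G γ)) + ∑ γ ∈ Mid, (C γ - G γ) := by
    rw [hLv, ← Finset.sum_filter_add_sum_filter_not NR (fun γ : ι => ht γ = 0)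
      (fun γ => C γ - G γ)]
    congr 1
    rw [hMid, hNR, Finset.filter_filter]
  -- leaves: children are empty, labels are singletons
  have hleaf_children : ∀ γ : ι, ht γ = 0 → T.children γ = ∅ := by
    intro γ hγ
    by_contra hc
    obtain ⟨β, hβ⟩ := Finset.nonempty_iff_ne_empty.2 hc
    have := ht_pos_of_child γ β hβ
    omega
  have hleaves : (∑ γ ∈ Lv, (C γ - G γ))
      = ∑ v : V, -((deg w v / Vt) * Real.log (deg w v / Vt)) := by
    have hterm : ∀ γ ∈ Lv, (C γ - G γ)
        = ∑ v ∈ T.label γ, -((deg w v / Vt) * Real.log (deg w v / Vt)) := by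
      intro γ hγ
      rw [hLv, Finset.mem_filter, hNR, Finset.mem_filter] at hγ
      obtain ⟨⟨_, hγroot⟩, hγ0⟩ := hγ
      have hcempty := hleaf_children γ hγ0
      obtain ⟨v, hv⟩ := Finset.card_eq_one.1 (T.leaf_singleton γ (by
        intro β hβ hpβ
        have : β ∈ T.children γ := (hmem_children γ β).2 ⟨hβ, hpβ⟩
        rw [hcempty] at this
        exact absurd this (Finset.notMem_empty β)))
      rw [hC, hG]
      simp only [if_neg hγroot, hcempty, Finset.sum_empty, zero_div, zero_mul, zero_sub]
      rw [hv, cut_singleton' w hsym hloop v, vol_singleton' w v, Finset.sum_singleton]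
    rw [Finset.sum_congr rfl hterm]
    rw [← Finset.sum_biUnion (by
      intro γ hγ γ' hγ' hne
      simp only [hLv, hNR, Finset.coe_filter, Set.mem_setOf_eq, Finset.mem_univ,
        true_and] at hγ hγ'
      exact hdisj K γ γ' hne (by omega) (by omega))]
    have hbiU : Lv.biUnion T.label = Finset.univ := by
      apply Finset.eq_univ_of_forall
      intro v
      obtain ⟨γ, hγc, hγv⟩ := exists_leaf v
      have hγ0 : ht γ = 0 := hleaf γ (by
        intro β hβ hpβ
        have : β ∈ T.children γ := (hmem_children γ β).2 ⟨hβ, hpβ⟩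
        rw [hγc] at this
        exact absurd this (Finset.notMem_empty β))
      have hγroot : γ ≠ T.root := by
        rintro rfl
        rw [hroot] at hγ0
        omega
      exact Finset.mem_biUnion.2 ⟨γ, by
        rw [hLv, Finset.mem_filter, hNR, Finset.mem_filter]
        exact ⟨⟨Finset.mem_univ _, hγroot⟩, hγ0⟩, hγv⟩
    rw [hbiU]
  -- internal nodes
  have hmid : ∀ γ ∈ Mid, (C γ - G γ) = -ψ γ := by
    intro γ hγ
    rw [hMid, Finset.mem_filter] at hγ
    rw [hC, hG, hψ]
    simp only [if_neg hγ.2.1]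
    rw [sub_div, sub_mul]
    ring
  have hmid' : (∑ γ ∈ Mid, (C γ - G γ)) = -∑ γ ∈ Mid, ψ γ := by
    rw [← Finset.sum_neg_distrib]
    exact Finset.sum_congr rfl hmid
  rw [hsplit1, hroot_term, hsplit2, hleaves, hmid', zero_add, Finset.sum_neg_distrib,
    ← sub_eq_add_neg]
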